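/- Let E be a finite set, P a stochastic matrix on E, c : E → ℝ bounded by ‖c‖, γ ≠ 0, and suppose (w, λ) with w : E → ℝ and λ ∈ ℝ satisfies the multiplicative Poisson equation w(x) = c(x) − λ + (1/γ) ln Σ_y e^{γ w(y)} P(x,y) for all x ∈ E. Then |λ| ≤ ‖c‖ := max_x |c(x)|. -/

import Mathlib

/-! The risk-sensitive average `(1/γ) log Σ_y e^{γ w y} p y` of `w` under a probability vector `p`
is monotone in `w` and fixes constants, so it lies between `min w` and `max w`. Evaluating the
Poisson equation at a maximiser `x*` of `w` gives `w x* ≤ c x* - λ + w x*`, i.e. `λ ≤ c x*`, and at a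
minimiser `c x_* ≤ λ`. -/

variable {E : Type*} [Fintype E] [Nonempty E]

def RowStochastic (P : Matrix E E ℝ) : Prop :=
  (∀ x y, 0 ≤ P x y) ∧ (∀ x, ∑ y, P x y = 1)

open Finset

variable {ι : Type*} [Fintype ι]

theorem sum_mul_pos_of_mem_stdSimplex {p f : ι → ℝ} (hp : p ∈ stdSimplex ℝ ι)
    (hf : ∀ y, 0 < f y) : 0 < ∑ y, f y * p y := by
  obtain ⟨y, -, hy⟩ := exists_ne_zero_of_sum_ne_zero (hp.2.symm ▸ one_ne_zero : ∑ y, p y ≠ 0)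
  exact sum_pos' (fun z _ => mul_nonneg (hf z).le (hp.1 z))
    ⟨y, mem_univ y, mul_pos (hf y) ((hp.1 y).lt_of_ne' hy)⟩

noncomputable def entropicMean (γ : ℝ) (p w : ι → ℝ) : ℝ :=
  (1 / γ) * Real.log (∑ y, Real.exp (γ * w y) * p y)

theorem entropicMean_const {p : ι → ℝ} (hp : p ∈ stdSimplex ℝ ι) {γ : ℝ} (hγ : γ ≠ 0) (a : ℝ) :
    entropicMean γ p (fun _ => a) = a := by
  rw [entropicMean, ← mul_sum, hp.2, mul_one, Real.log_exp]
  field_simp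

theorem entropicMean_neg (γ : ℝ) (p w : ι → ℝ) :
    entropicMean (-γ) p (-w) = -entropicMean γ p w := by
  simp only [entropicMean, Pi.neg_apply, neg_mul_neg]
  ring

theorem entropicMean_mono_of_pos {p : ι → ℝ} (hp : p ∈ stdSimplex ℝ ι) {γ : ℝ} (hγ : 0 < γ)
    {w v : ι → ℝ} (hwv : w ≤ v) : entropicMean γ p w ≤ entropicMean γ p v := by
  have hsum : ∑ y, Real.exp (γ * w y) * p y ≤ ∑ y, Real.exp (γ * v y) * p y :=
    sum_le_sum fun y _ => mul_le_mul_of_nonneg_right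
      (Real.exp_le_exp.2 (mul_le_mul_of_nonneg_left (hwv y) hγ.le)) (hp.1 y)
  have hpos := sum_mul_pos_of_mem_stdSimplex hp fun y => Real.exp_pos (γ * w y)
  exact mul_le_mul_of_nonneg_left (Real.log_le_log hpos hsum) (one_div_pos.2 hγ).le

theorem entropicMean_mono {p : ι → ℝ} (hp : p ∈ stdSimplex ℝ ι) {γ : ℝ} (hγ : γ ≠ 0)
    {w v : ι → ℝ} (hwv : w ≤ v) : entropicMean γ p w ≤ entropicMean γ p v := by
  rcases hγ.lt_or_gt with hneg | hpos
  · have := entropicMean_mono_of_pos hp (neg_pos.2 hneg) (neg_le_neg hwv)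
    rwa [entropicMean_neg, entropicMean_neg, neg_le_neg_iff] at this
  · exact entropicMean_mono_of_pos hp hpos hwv

theorem entropicMean_le {p : ι → ℝ} (hp : p ∈ stdSimplex ℝ ι) {γ : ℝ} (hγ : γ ≠ 0)
    {w : ι → ℝ} {b : ℝ} (h : ∀ y, w y ≤ b) : entropicMean γ p w ≤ b :=
  entropicMean_const hp hγ b ▸ entropicMean_mono hp hγ h

theorem le_entropicMean {p : ι → ℝ} (hp : p ∈ stdSimplex ℝ ι) {γ : ℝ} (hγ : γ ≠ 0)
    {w : ι → ℝ} {a : ℝ} (h : ∀ y, a ≤ w y) : a ≤ entropicMean γ p w :=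
  entropicMean_const hp hγ a ▸ entropicMean_mono hp hγ h

/-- The long-run value in the multiplicative Poisson equation is bounded by the
sup-norm of the reward. -/
theorem MPE_value_bounded
    (P : Matrix E E ℝ) (hP : RowStochastic P)
    (c : E → ℝ) (γ : ℝ) (hγ : γ ≠ 0)
    (w : E → ℝ) (lam : ℝ)
    (hMPE : ∀ x, w x = c x - lam +
      (1 / γ) * Real.log (∑ y, Real.exp (γ * w y) * P x y)) :
    |lam| ≤ Finset.univ.sup' Finset.univ_nonempty (fun x => |c x|) := by
  have hrow (x : E) : P x ∈ stdSimplex ℝ E := ⟨hP.1 x, hP.2 x⟩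
  have hMPE' (x : E) : w x = c x - lam + entropicMean γ (P x) w := hMPE x
  obtain ⟨a, -, ha⟩ := exists_mem_eq_sup' univ_nonempty w
  obtain ⟨b, -, hb⟩ := exists_mem_eq_inf' univ_nonempty w
  have hupper : lam ≤ c a := by
    have := entropicMean_le (hrow a) hγ fun y => ha ▸ le_sup' w (mem_univ y)
    linarith [hMPE' a]
  have hlower : c b ≤ lam := by
    have := le_entropicMean (hrow b) hγ fun y => hb ▸ inf'_le w (mem_univ y)
    linarith [hMPE' b]
  rw [abs_le]
  constructor
  · linarith [neg_abs_le (c b), le_sup' (fun x => |c x|) (mem_univ b)]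
  · linarith [le_abs_self (c a), le_sup' (fun x => |c x|) (mem_univ a)]
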